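/- arXiv:2103.07842 — 2 statements merged into one kernel-verified Lean document; each statement's English description precedes it below -/
import Mathlib

section
/- Let P : {0,1}^n → ℝ be a multilinear polynomial of total degree at most d. Then there exists a univariate real polynomial p of degree at most d such that for every i ∈ {0, ..., n}, p(i) equals the average of P(x) over all x ∈ {0,1}^n of Hamming weight i. -/
/-!
On the Boolean cube `x_j ^ k = x_j` for `k ≥ 1`, so the monomial `x ^ v` agrees there with
`∏_{j ∈ supp v} x_j`. Identifying the weight-`i` slice with the `i`-subsets `T` of the `n`
coordinates, the average of `∏_{j ∈ S} x_j` over it is the proportion of `T` containing `S`,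
i.e. `C(n - s, i - s) / C(n, i) = i(i-1)⋯(i-s+1) / n(n-1)⋯(n-s+1)` with `s = #S`. This is a
polynomial of degree `s ≤ deg P` in `i`, and averaging is linear.
-/

open Finset Polynomial

lemma Nat.choose_sub_mul_descFactorial {n i s : ℕ} (h : s ≤ i) :
    (n - s).choose (i - s) * n.descFactorial s = n.choose i * i.descFactorial s := by
  rw [Nat.descFactorial_eq_factorial_mul_choose, Nat.descFactorial_eq_factorial_mul_choose,
    mul_left_comm (n.choose i), Nat.choose_mul h]
  ring

lemma Finsupp.card_support_le_sum {σ : Type*} (v : σ →₀ ℕ) :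
    #v.support ≤ v.sum fun _ e => e := by
  have := card_nsmul_le_sum v.support v 1 fun j hj =>
    Nat.one_le_iff_ne_zero.2 (Finsupp.mem_support_iff.1 hj)
  simpa [Finsupp.sum] using this

section HammingSlice

variable {ι : Type*} [Fintype ι] [DecidableEq ι]

lemma card_filter_powersetCard_subset_mul_descFactorial (S : Finset ι) (i : ℕ) :
    #{T ∈ powersetCard i (univ : Finset ι) | S ⊆ T} * (Fintype.card ι).descFactorial #S =
      (Fintype.card ι).choose i * i.descFactorial #S := by
  rcases le_or_gt #S i with h | h
  · rw [card_filter_powersetCard_subset _ _ _ (subset_univ S) h, card_univ,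
      Nat.choose_sub_mul_descFactorial h]
  · have : {T ∈ powersetCard i (univ : Finset ι) | S ⊆ T} = ∅ :=
      filter_eq_empty_iff.2 fun T hT hST =>
        ((card_le_card hST).trans_eq (mem_powersetCard.1 hT).2).not_gt h
    rw [this, Nat.descFactorial_eq_zero_iff_lt.2 h]
    simp

variable (ι) in
def hammingSlice (i : ℕ) : Finset (ι → Bool) := {x | #{j | x j} = i}

lemma sum_hammingSlice_eq_sum_powersetCard {M : Type*} [AddCommMonoid M] (i : ℕ)
    (f : (ι → Bool) → M) :
    ∑ x ∈ hammingSlice ι i, f x = ∑ T ∈ powersetCard i univ, f (fun j => decide (j ∈ T)) := by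
  refine sum_nbij' (fun x => ({j | x j} : Finset ι)) (fun T j => decide (j ∈ T))
    ?_ ?_ ?_ ?_ ?_ <;> intro x hx
  · simpa [hammingSlice] using hx
  · simpa [hammingSlice] using hx
  · funext j; simp
  · ext j; simp
  · congr; funext j; simp

lemma card_hammingSlice (i : ℕ) : #(hammingSlice ι i) = (Fintype.card ι).choose i := by
  simpa using sum_hammingSlice_eq_sum_powersetCard (M := ℕ) i (fun _ => 1)

lemma sum_hammingSlice_prod_boole {R : Type*} [CommSemiring R] (i : ℕ) (S : Finset ι) :
    ∑ x ∈ hammingSlice ι i, ∏ j ∈ S, (if x j then (1 : R) else 0) =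
      #{T ∈ powersetCard i (univ : Finset ι) | S ⊆ T} := by
  rw [sum_hammingSlice_eq_sum_powersetCard]
  simp only [decide_eq_true_eq, prod_boole, ← subset_iff, sum_boole]

lemma sum_hammingSlice_prod_boole_div_card {K : Type*} [Field K] [CharZero K] {i : ℕ}
    (hi : i ≤ Fintype.card ι) (S : Finset ι) :
    (∑ x ∈ hammingSlice ι i, ∏ j ∈ S, (if x j then (1 : K) else 0)) / #(hammingSlice ι i) =
      (i.descFactorial #S : K) / (Fintype.card ι).descFactorial #S := by
  have hchoose : ((Fintype.card ι).choose i : K) ≠ 0 := by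
    exact_mod_cast (Nat.choose_pos hi).ne'
  have hdesc : ((Fintype.card ι).descFactorial #S : K) ≠ 0 := by
    exact_mod_cast (Nat.descFactorial_pos.2 (card_le_univ S)).ne'
  rw [sum_hammingSlice_prod_boole, card_hammingSlice, div_eq_div_iff hchoose hdesc]
  exact_mod_cast (card_filter_powersetCard_subset_mul_descFactorial S i).trans (mul_comm _ _)

end HammingSlice

namespace MvPolynomial

variable {σ : Type*}

lemma eval_eq_sum_prod_of_isIdempotentElem {R : Type*} [CommSemiring R] {b : σ → R}
    (hb : ∀ j, IsIdempotentElem (b j)) (P : MvPolynomial σ R) :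
    eval b P = ∑ v ∈ P.support, P.coeff v * ∏ j ∈ v.support, b j :=
  sum_congr rfl fun _ _ => congr_arg _ <| prod_congr rfl fun j hj =>
    (hb j).pow_eq (Finsupp.mem_support_iff.1 hj)

variable {K : Type*} [Field K]

noncomputable def hammingSymmetrization (n : ℕ) (P : MvPolynomial σ K) : K[X] :=
  ∑ v ∈ P.support, (P.coeff v / n.descFactorial #v.support) • descPochhammer K #v.support

lemma degree_hammingSymmetrization_le (n : ℕ) (P : MvPolynomial σ K) :
    (P.hammingSymmetrization n).degree ≤ P.totalDegree := by
  refine (degree_sum_le _ _).trans <| Finset.sup_le fun v hv => (degree_smul_le _ _).trans ?_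
  rw [degree_eq_natDegree (monic_descPochhammer K _).ne_zero, descPochhammer_natDegree]
  exact_mod_cast v.card_support_le_sum.trans (le_totalDegree hv)

lemma eval_hammingSymmetrization [CharZero K] {ι : Type*} [Fintype ι] [DecidableEq ι]
    (P : MvPolynomial ι K) {i : ℕ} (hi : i ≤ Fintype.card ι) :
    (P.hammingSymmetrization (Fintype.card ι)).eval (i : K) =
      (∑ x ∈ hammingSlice ι i, eval (fun j => if x j then 1 else 0) P) / #(hammingSlice ι i) := by
  have hbool (x : ι → Bool) (j : ι) : IsIdempotentElem (if x j then (1 : K) else 0) := by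
    split_ifs
    exacts [.one, .zero]
  simp only [eval_eq_sum_prod_of_isIdempotentElem (hbool _), sum_comm (s := hammingSlice ι i),
    ← mul_sum, sum_div, mul_div_assoc, sum_hammingSlice_prod_boole_div_card hi,
    hammingSymmetrization, eval_finsetSum, eval_smul, smul_eq_mul,
    descPochhammer_eval_eq_descFactorial]
  refine sum_congr rfl fun v _ => ?_
  ring

end MvPolynomial

theorem stmt15_general (n d : ℕ) (P : MvPolynomial (Fin n) ℝ)
    (hdeg : P.totalDegree ≤ d) :
    ∃ p : Polynomial ℝ, p.degree ≤ (d : ℕ) ∧ ∀ i ≤ n,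
      p.eval (i : ℝ) =
        (∑ x ∈ Finset.univ.filter
            (fun x : Fin n → Bool => (Finset.univ.filter (fun j => x j)).card = i),
          MvPolynomial.eval (fun j => if x j then (1 : ℝ) else 0) P) /
        ((Finset.univ.filter
            (fun x : Fin n → Bool => (Finset.univ.filter (fun j => x j)).card = i)).card : ℝ) := by
  refine ⟨P.hammingSymmetrization n,
    (P.degree_hammingSymmetrization_le n).trans (by exact_mod_cast hdeg), fun i hi => ?_⟩
  have := P.eval_hammingSymmetrization (i := i) (by simpa using hi)
  rwa [Fintype.card_fin] at this

theorem stmt15 (n d : ℕ) (P : MvPolynomial (Fin n) ℝ)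
    (hml : ∀ v ∈ P.support, ∀ j, v j ≤ 1)
    (hdeg : P.totalDegree ≤ d) :
    ∃ p : Polynomial ℝ, p.degree ≤ (d : ℕ) ∧ ∀ i ≤ n,
      p.eval (i : ℝ) =
        (∑ x ∈ Finset.univ.filter
            (fun x : Fin n → Bool => (Finset.univ.filter (fun j => x j)).card = i),
          MvPolynomial.eval (fun j => if x j then (1 : ℝ) else 0) P) /
        ((Finset.univ.filter
            (fun x : Fin n → Bool => (Finset.univ.filter (fun j => x j)).card = i)).card : ℝ) :=
  stmt15_general n d P hdeg
end

section
/- Let n, k be even positive integers with k < n. Then (k!·(n-k)!·n^k) / ((k/2)!²·n!·2^k) · (1/(2n)^k) · √((n+k)!/(n-k)!) ≤ Poly(n) · ((n-k)^{(n-k)/2}·(n+k)^{(n+k)/2}) / (2^k·n^n), where Poly(n) is some fixed polynomial in n (e.g., n^5 suffices). -/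
/-!
Writing `a = n - k`, `b = n + k`, the left-hand side equals
`C(k, k/2) / 2^k · √(a! b!) / (n! 2^k)`, and `C(k, k/2) ≤ 2^k`. The Stirling-type bounds
`(m/e)^m ≤ m! ≤ e √m (m/e)^m` give `a! b! / n!² ≤ e² √(ab) a^a b^b / n^(2n)`, where the powers
of `e` cancel because `a + b = 2n`, and `e² √(ab) ≤ e² n ≤ n^10` for `n ≥ 2`.
-/

open Real Nat

theorem factorial_mul_exp_one_pow_le {m : ℕ} (hm : m ≠ 0) :
    (m ! : ℝ) * exp 1 ^ m ≤ exp 1 * √m * m ^ m := by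
  have hseq : Stirling.stirlingSeq m ≤ exp 1 / √2 := by
    obtain ⟨j, rfl⟩ := Nat.exists_eq_succ_of_ne_zero hm
    simpa using Stirling.stirlingSeq'_antitone (Nat.zero_le j)
  rw [Stirling.stirlingSeq, div_le_div_iff₀ (by positivity) (by positivity), div_pow,
    Real.sqrt_mul zero_le_two] at hseq
  field_simp at hseq
  exact hseq

theorem pow_le_factorial_mul_exp_one_pow (n : ℕ) : (n : ℝ) ^ n ≤ n ! * exp 1 ^ n := by
  have h := Real.pow_div_factorial_le_exp _ (Nat.cast_nonneg n) n
  rwa [div_le_iff₀ (by positivity), ← Real.exp_one_pow, mul_comm] at h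

theorem factorial_mul_factorial_mul_pow_le {a b n : ℕ} (ha : a ≠ 0) (hb : b ≠ 0)
    (hab : a + b = 2 * n) :
    (a ! * b ! : ℝ) * n ^ (2 * n) ≤ exp 1 ^ 2 * n * (a ^ a * b ^ b) * (n ! : ℝ) ^ 2 := by
  have habR : (a : ℝ) + b = 2 * n := by exact_mod_cast hab
  have hgm : √a * √b ≤ (n : ℝ) := by
    rw [← Real.sqrt_mul (Nat.cast_nonneg a), Real.sqrt_le_left (Nat.cast_nonneg n)]
    nlinarith [sq_nonneg ((a : ℝ) - b)]
  have hexp : exp 1 ^ a * exp 1 ^ b = (exp 1 ^ n) ^ 2 := by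
    rw [← pow_add, hab, ← pow_mul, mul_comm]
  refine le_of_mul_le_mul_right ?_ (by positivity : (0 : ℝ) < (exp 1 ^ n) ^ 2)
  calc (a ! * b ! : ℝ) * n ^ (2 * n) * (exp 1 ^ n) ^ 2
      = (a ! * exp 1 ^ a) * (b ! * exp 1 ^ b) * ((n : ℝ) ^ n) ^ 2 := by
        rw [← hexp, pow_mul']; ring
    _ ≤ (exp 1 * √a * a ^ a) * (exp 1 * √b * b ^ b) * (n ! * exp 1 ^ n) ^ 2 := by
        gcongr ?_ * ?_ * ?_ ^ 2
        exacts [factorial_mul_exp_one_pow_le ha, factorial_mul_exp_one_pow_le hb,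
          pow_le_factorial_mul_exp_one_pow n]
    _ = exp 1 ^ 2 * (√a * √b) * (a ^ a * b ^ b) * (n ! : ℝ) ^ 2 * (exp 1 ^ n) ^ 2 := by ring
    _ ≤ exp 1 ^ 2 * n * (a ^ a * b ^ b) * (n ! : ℝ) ^ 2 * (exp 1 ^ n) ^ 2 := by gcongr

theorem sqrt_factorial_mul_factorial_mul_pow_le {a b n : ℕ} (ha : a ≠ 0) (hb : b ≠ 0)
    (hab : a + b = 2 * n) (hae : Even a) (hbe : Even b) (hn : 2 ≤ n) :
    √(a ! * b ! : ℝ) * n ^ n ≤ n ^ 5 * (a ^ (a / 2) * b ^ (b / 2)) * n ! := by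
  have hnR : (2 : ℝ) ≤ n := by exact_mod_cast hn
  have hpoly : exp 1 ^ 2 * n ≤ (n : ℝ) ^ 10 := by
    have he : exp 1 ^ 2 ≤ 2 ^ 9 := by nlinarith [exp_one_lt_three, exp_pos 1]
    calc exp 1 ^ 2 * n ≤ 2 ^ 9 * n := by gcongr
      _ ≤ (n : ℝ) ^ 9 * n := by gcongr
      _ = (n : ℝ) ^ 10 := by ring
  have hsq (m : ℕ) (hm : Even m) : ((m : ℝ) ^ (m / 2)) ^ 2 = (m : ℝ) ^ m := by
    rw [← pow_mul, Nat.div_two_mul_two_of_even hm]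
  refine (pow_le_pow_iff_left₀ (by positivity) (by positivity) two_ne_zero).mp ?_
  calc (√(a ! * b ! : ℝ) * n ^ n) ^ 2 = (a ! * b ! : ℝ) * n ^ (2 * n) := by
        rw [mul_pow, Real.sq_sqrt (by positivity), ← pow_mul, mul_comm n]
    _ ≤ exp 1 ^ 2 * n * (a ^ a * b ^ b) * (n ! : ℝ) ^ 2 :=
        factorial_mul_factorial_mul_pow_le ha hb hab
    _ ≤ (n : ℝ) ^ 10 * (a ^ a * b ^ b) * (n ! : ℝ) ^ 2 := by gcongr
    _ = ((n : ℝ) ^ 5 * (a ^ (a / 2) * b ^ (b / 2)) * n !) ^ 2 := by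
        rw [← hsq a hae, ← hsq b hbe]; ring

theorem factorial_div_factorial_sq_mul_sqrt_eq {n k : ℕ} (hk : Even k) (hn : n ≠ 0) (a b : ℕ) :
    ((k ! : ℝ) * a ! * (n : ℝ) ^ k) / ((k / 2)! ^ 2 * n ! * 2 ^ k) * (1 / (2 * (n : ℝ)) ^ k) *
        √((b ! : ℝ) / a !) =
      (k.choose (k / 2) : ℝ) / 2 ^ k * (√(a ! * b ! : ℝ) / (n ! * 2 ^ k)) := by
  have hchoose : (k ! : ℝ) = k.choose (k / 2) * (k / 2)! ^ 2 := by
    have h := Nat.choose_mul_factorial_mul_factorial (Nat.div_le_self k 2)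
    rw [show k - k / 2 = k / 2 by obtain ⟨K, rfl⟩ := hk; omega] at h
    rw [← h]; push_cast; ring
  have hsqrt : √((b ! : ℝ) / a !) * a ! = √(a ! * b ! : ℝ) := by
    have ha : (0 : ℝ) < a ! := by positivity
    rw [Real.sqrt_div' _ ha.le, div_mul_eq_mul_div, div_eq_iff (by positivity),
      Real.sqrt_mul ha.le, mul_right_comm, Real.mul_self_sqrt ha.le, mul_comm]
  rw [hchoose, ← hsqrt, mul_pow]
  field_simp

theorem stmt19_general (n k : ℕ) (hn : Even n) (hk : Even k) (hkn : k < n) :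
    ((Nat.factorial k : ℝ) * (Nat.factorial (n - k) : ℝ) * (n : ℝ)^k) /
        ((Nat.factorial (k / 2) : ℝ)^2 * (Nat.factorial n : ℝ) * 2^k) *
      (1 / (2 * (n : ℝ))^k) *
      Real.sqrt ((Nat.factorial (n + k) : ℝ) / (Nat.factorial (n - k) : ℝ)) ≤
    (n : ℝ)^5 * (((n - k : ℕ) : ℝ)^((n - k) / 2) * ((n + k : ℕ) : ℝ)^((n + k) / 2)) /
      (2^k * (n : ℝ)^n) := by
  have hn2 : 2 ≤ n := by obtain ⟨N, rfl⟩ := hn; omega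
  have hchoose : (k.choose (k / 2) : ℝ) / 2 ^ k ≤ 1 :=
    div_le_one_of_le₀ (by exact_mod_cast Nat.choose_le_two_pow k (k / 2)) (by positivity)
  have hstirling := sqrt_factorial_mul_factorial_mul_pow_le (a := n - k) (b := n + k)
    (by omega) (by omega) (by omega) (hn.tsub hk) (hn.add hk) hn2
  rw [factorial_div_factorial_sq_mul_sqrt_eq hk (by omega)]
  calc _ ≤ 1 * (√((n - k)! * (n + k)! : ℝ) / ((n ! : ℝ) * 2 ^ k)) := by gcongr
    _ ≤ _ := by
        rw [one_mul, div_le_div_iff₀ (by positivity) (by positivity)]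
        linarith [mul_le_mul_of_nonneg_right hstirling (by positivity : (0 : ℝ) ≤ 2 ^ k)]

theorem stmt19 (n k : ℕ) (hn : Even n) (hk : Even k) (hk0 : 0 < k) (hkn : k < n) :
    ((Nat.factorial k : ℝ) * (Nat.factorial (n - k) : ℝ) * (n : ℝ)^k) /
        ((Nat.factorial (k / 2) : ℝ)^2 * (Nat.factorial n : ℝ) * 2^k) *
      (1 / (2 * (n : ℝ))^k) *
      Real.sqrt ((Nat.factorial (n + k) : ℝ) / (Nat.factorial (n - k) : ℝ)) ≤
    (n : ℝ)^5 * (((n - k : ℕ) : ℝ)^((n - k) / 2) * ((n + k : ℕ) : ℝ)^((n + k) / 2)) /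
      (2^k * (n : ℝ)^n) :=
  stmt19_general n k hn hk hkn
end
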